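/- arXiv:2209.06595 — 4 statements merged into one kernel-verified Lean document; each statement's English description precedes it below -/
import Mathlib

section
/- Let G : C → D be an exact functor between exact categories and let (D, D_‡, D^‡) be a sub-exact structure of the exact structure on D. Define C_‡ (resp. C^‡) to be the class of inflations (resp. deflations) of C whose image under G lies in D_‡ (resp. D^‡). Then (C, C_‡, C^‡) is an exact structure on C, it is a sub-exact structure of the original one, and G defines an exact functor (C, C_‡, C^‡) → (D, D_‡, D^‡). -/
/-!
STATEMENT 5: Let G : C → D be an exact functor between exact categories and let
(D, D_‡, D^‡) be a sub-exact structure of the exact structure on D.  Define C_‡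
(resp. C^‡) to be the class of inflations (resp. deflations) of C whose image under
G lies in D_‡ (resp. D^‡).  Then (C, C_‡, C^‡) is an exact structure on C, a
sub-exact structure of the original one, and G is an exact functor
(C, C_‡, C^‡) → (D, D_‡, D^‡).

We use the Barwick-style axioms for an exact structure (as in the paper's
∞-categorical definition, interpreted 1-categorically).
-/

open CategoryTheory Limits

namespace Stmt5

universe v u

/-- An exact structure (inflations and deflations satisfying the Barwick axioms)
on an additive category. -/
structure ExactStruct (C : Type u) [Category.{v} C] [Preadditive C]
    [HasZeroObject C] where
  infl : MorphismProperty C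
  defl : MorphismProperty C
  infl_comp : ∀ {X Y Z : C} (f : X ⟶ Y) (g : Y ⟶ Z), infl f → infl g → infl (f ≫ g)
  defl_comp : ∀ {X Y Z : C} (f : X ⟶ Y) (g : Y ⟶ Z), defl f → defl g → defl (f ≫ g)
  infl_from_zero : ∀ {O X : C} (f : O ⟶ X), IsZero O → infl f
  defl_to_zero : ∀ {X O : C} (f : X ⟶ O), IsZero O → defl f
  pushout_infl : ∀ {X Y X' : C} (i : X ⟶ Y) (f : X ⟶ X'), infl i →
    ∃ (Y' : C) (i' : X' ⟶ Y') (g : Y ⟶ Y'), IsPushout f i i' g ∧ infl i'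
  pullback_defl : ∀ {Y Z Z' : C} (p : Y ⟶ Z) (f : Z' ⟶ Z), defl p →
    ∃ (Y' : C) (p' : Y' ⟶ Z') (g : Y' ⟶ Y), IsPullback g p' p f ∧ defl p'
  bicartesian : ∀ {X Y X' Y' : C} (a : X ⟶ Y) (b : X ⟶ X') (c : Y ⟶ Y') (d : X' ⟶ Y'),
    (IsPullback a b c d ∧ infl c ∧ defl d) ↔ (IsPushout a b c d ∧ infl b ∧ defl a)

/-- A conflation of an exact structure: an inflation followed by a deflation which is
its cokernel (equivalently, a fiber–cofiber sequence with exact legs). -/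
def ExactStruct.IsConflation {C : Type u} [Category.{v} C] [Preadditive C]
    [HasZeroObject C] (E : ExactStruct C) {X Y Z : C} (i : X ⟶ Y) (p : Y ⟶ Z) : Prop :=
  E.infl i ∧ E.defl p ∧ ∃ w : i ≫ p = 0,
    Nonempty (IsColimit (CokernelCofork.ofπ p w)) ∧
    Nonempty (IsLimit (KernelFork.ofι i w))

/-- `E'` is a sub-exact structure of `E`. -/
def ExactStruct.Sub {C : Type u} [Category.{v} C] [Preadditive C] [HasZeroObject C]
    (E' E : ExactStruct C) : Prop :=
  (∀ {X Y : C} (f : X ⟶ Y), E'.infl f → E.infl f) ∧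
  (∀ {X Y : C} (f : X ⟶ Y), E'.defl f → E.defl f)

/-- An exact functor between exact categories: it preserves zero objects,
inflations, deflations and conflations. -/
def IsExactFunctor {C D : Type u} [Category.{v} C] [Preadditive C] [HasZeroObject C]
    [Category.{v} D] [Preadditive D] [HasZeroObject D]
    (G : C ⥤ D) (EC : ExactStruct C) (ED : ExactStruct D) : Prop :=
  (∀ X : C, IsZero X → IsZero (G.obj X)) ∧
  (∀ {X Y : C} (f : X ⟶ Y), EC.infl f → ED.infl (G.map f)) ∧
  (∀ {X Y : C} (f : X ⟶ Y), EC.defl f → ED.defl (G.map f)) ∧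
  (∀ {X Y Z : C} (i : X ⟶ Y) (p : Y ⟶ Z),
    EC.IsConflation i p → ED.IsConflation (G.map i) (G.map p))

/-!
The one non-formal input is that an exact functor `G` preserves pushouts along inflations
(and, dually, pullbacks along deflations). A commutative square `(f, i, i', g)` is a pushout
exactly when `(i', g) : A' ⊞ B ⟶ B'` is a cokernel of `(f, -i) : A ⟶ A' ⊞ B`, and when `i` is an
inflation these two maps form a conflation. `G` preserves conflations, and it is additive
because it preserves the split conflations `X ⟶ X ⊞ Y ⟶ Y`; so the image of the square is again
a pushout. Each axiom for the pulled-back classes is then the same axiom in `C`, with the image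
under `G` checked by the same axiom in `D`.
-/

section Preadditive

open ZeroObject

variable {C : Type u} [Category.{v} C] [Preadditive C]

lemma isPushout_zero_of_isColimit_cokernelCofork [HasZeroObject C] {A B Q : C} {i : A ⟶ B}
    {q : B ⟶ Q} {w : i ≫ q = 0} (h : IsColimit (CokernelCofork.ofπ q w)) :
    IsPushout (0 : A ⟶ 0) i (0 : 0 ⟶ Q) q :=
  IsPushout.of_isColimit' ⟨by simp [w]⟩ (PushoutCocone.IsColimit.mk _
    (fun s => h.desc (CokernelCofork.ofπ s.inr (by simp [← s.condition])))
    (fun _ => (isZero_zero C).eq_of_src _ _)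
    (fun s => Cofork.IsColimit.π_desc' h _ _)
    (fun s _ _ hm => Cofork.IsColimit.hom_ext h
      (by rw [Cofork.IsColimit.π_desc h]; simpa using hm)))

noncomputable def isLimitKernelForkOfIsPullbackZero [HasZeroObject C] {A B Q : C}
    {i : A ⟶ B} {q : B ⟶ Q} (h : IsPullback (0 : A ⟶ 0) i (0 : 0 ⟶ Q) q) (w : i ≫ q = 0) :
    IsLimit (KernelFork.ofι i w) :=
  KernelFork.IsLimit.ofι i w (fun k hk => h.lift 0 k (by simp [hk]))
    (fun _ _ => h.lift_snd _ _ _)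
    (fun _ _ _ hm => h.hom_ext ((isZero_zero C).eq_of_tgt _ _) (by simpa using hm))

lemma isPushout_biprod_inr_map {A B : C} (X : C) (i : A ⟶ B) [HasBinaryBiproduct X A]
    [HasBinaryBiproduct X B] :
    IsPushout (biprod.inr : A ⟶ X ⊞ A) i (biprod.map (𝟙 X) i) biprod.inr :=
  IsPushout.of_isColimit' ⟨by simp⟩ (PushoutCocone.IsColimit.mk _
    (fun s => biprod.desc (biprod.inl ≫ s.inl) s.inr)
    (fun s => by ext <;> simp [s.condition])
    (fun s => by simp)
    (fun s m h₁ h₂ => by ext <;> simp [← h₁, ← h₂]))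

lemma isPushout_of_isColimit_cokernelCofork {A A' B Q : C} {b : BinaryBicone A' B}
    (hb : b.IsBilimit) {f : A ⟶ A'} {i : A ⟶ B} {m : A ⟶ b.pt}
    (hm : m = f ≫ b.inl - i ≫ b.inr) {q : b.pt ⟶ Q} {w : m ≫ q = 0}
    (h : IsColimit (CokernelCofork.ofπ q w)) :
    IsPushout f i (b.inl ≫ q) (b.inr ≫ q) := by
  have sq : f ≫ b.inl ≫ q = i ≫ b.inr ≫ q := by
    rw [← sub_eq_zero, ← Category.assoc, ← Category.assoc, ← Preadditive.sub_comp, ← hm, w]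
  have hq (t : CokernelCofork m) : q ≫ h.desc t = t.π := Cofork.IsColimit.π_desc h
  refine IsPushout.of_isColimit' ⟨sq⟩ (PushoutCocone.IsColimit.mk _
    (fun s => h.desc (CokernelCofork.ofπ (b.fst ≫ s.inl + b.snd ≫ s.inr)
      (by simp [hm, s.condition])))
    (fun s => ?_) (fun s => ?_) (fun s m' h₁ h₂ => Cofork.IsColimit.hom_ext h ?_))
  · simp [hq]
  · simp [hq]
  · show q ≫ m' = q ≫ _
    rw [hq, ← Category.id_comp q, ← IsBilimit.binary_total hb]
    simp [← h₁, ← h₂]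

end Preadditive

namespace ExactStruct

open ZeroObject

variable {C : Type u} [Category.{v} C] [Preadditive C] [HasZeroObject C]

lemma hasBinaryBiproducts (E : ExactStruct C) : HasBinaryBiproducts C where
  has_binary_biproduct X Y := by
    obtain ⟨_, i, g, h, -⟩ :=
      E.pushout_infl (0 : 0 ⟶ Y) (0 : 0 ⟶ X) (E.infl_from_zero _ (isZero_zero C))
    have : HasBinaryCoproduct X Y :=
      ⟨⟨⟨_, isCoproductOfIsInitialIsPushout i g 0 0 (isZero_zero C).isInitial h.isColimit⟩⟩⟩
    exact HasBinaryBiproduct.of_hasBinaryCoproduct X Y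

variable (E : ExactStruct C)

lemma infl_of_isIso {A B : C} (f : A ⟶ B) [IsIso f] : E.infl f :=
  ((E.bicartesian (0 : A ⟶ 0) f (𝟙 0) 0).mp ⟨IsPullback.of_vert_isIso ⟨by simp⟩,
    E.infl_from_zero _ (isZero_zero C), E.defl_to_zero _ (isZero_zero C)⟩).2.1

lemma defl_of_isIso {A B : C} (f : A ⟶ B) [IsIso f] : E.defl f :=
  ((E.bicartesian (𝟙 0) (0 : 0 ⟶ A) 0 f).mpr ⟨IsPushout.of_horiz_isIso ⟨by simp⟩,
    E.infl_from_zero _ (isZero_zero C), E.defl_to_zero _ (isZero_zero C)⟩).2.2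

variable {E}

lemma infl_of_isPushout {A B A' B' : C} {f : A ⟶ A'} {i : A ⟶ B} {i' : A' ⟶ B'}
    {g : B ⟶ B'} (h : IsPushout f i i' g) (hi : E.infl i) : E.infl i' := by
  obtain ⟨_, j, _, h', hj⟩ := E.pushout_infl i f hi
  rw [← h'.inl_isoIsPushout_hom _ _ h]
  exact E.infl_comp _ _ hj (E.infl_of_isIso _)

lemma defl_of_isPullback {A B A' B' : C} {g : A' ⟶ A} {p' : A' ⟶ B'} {p : A ⟶ B}
    {f : B' ⟶ B} (h : IsPullback g p' p f) (hp : E.defl p) : E.defl p' := by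
  obtain ⟨_, q, _, h', hq⟩ := E.pullback_defl p f hp
  rw [← h'.isoIsPullback_inv_snd _ _ h]
  exact E.defl_comp _ _ (E.defl_of_isIso _) hq

lemma infl_neg {A B : C} {i : A ⟶ B} (hi : E.infl i) : E.infl (-i) := by
  have : IsIso (-𝟙 B) := ⟨⟨-𝟙 B, by simp, by simp⟩⟩
  simpa using E.infl_comp _ _ hi (E.infl_of_isIso (-𝟙 B))

lemma infl_inl {X Y : C} {b : BinaryBicone X Y} (hb : b.IsBilimit) : E.infl b.inl :=
  infl_of_isPushout (IsPushout.of_isBilimit hb) (E.infl_from_zero _ (isZero_zero C))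

lemma infl_inr {X Y : C} {b : BinaryBicone X Y} (hb : b.IsBilimit) : E.infl b.inr :=
  infl_of_isPushout (IsPushout.of_isBilimit hb).flip (E.infl_from_zero _ (isZero_zero C))

lemma defl_snd {X Y : C} {b : BinaryBicone X Y} (hb : b.IsBilimit) : E.defl b.snd :=
  defl_of_isPullback (IsPullback.of_isBilimit hb) (E.defl_to_zero _ (isZero_zero C))

lemma isConflation_inl_snd {X Y : C} {b : BinaryBicone X Y} (hb : b.IsBilimit) :
    E.IsConflation b.inl b.snd :=
  ⟨infl_inl hb, defl_snd hb, b.inl_snd, ⟨b.isColimitInlCokernelCofork hb.isColimit⟩,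
    ⟨b.isLimitSndKernelFork hb.isLimit⟩⟩

lemma isConflation_of_isColimit {A B Q : C} {i : A ⟶ B} {q : B ⟶ Q} (hi : E.infl i)
    {w : i ≫ q = 0} (h : IsColimit (CokernelCofork.ofπ q w)) : E.IsConflation i q := by
  obtain ⟨hpb, -, hq⟩ := (E.bicartesian _ _ _ _).mpr
    ⟨isPushout_zero_of_isColimit_cokernelCofork h, hi, E.defl_to_zero _ (isZero_zero C)⟩
  exact ⟨hi, hq, w, ⟨h⟩, ⟨isLimitKernelForkOfIsPullbackZero hpb w⟩⟩

section

variable [HasBinaryBiproducts C]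

lemma infl_biprod_lift_neg {A A' B : C} (f : A ⟶ A') {i : A ⟶ B} (hi : E.infl i) :
    E.infl (biprod.lift f (-i)) := by
  have h : biprod.lift f (-i) =
      biprod.inr ≫ (Biprod.unipotentLower f).hom ≫ biprod.map (𝟙 A') (-i) := by
    ext <;> simp [Biprod.ofComponents]
  rw [h]
  exact E.infl_comp _ _ (infl_inr (BinaryBiproduct.isBilimit _ _)) (E.infl_comp _ _
    (E.infl_of_isIso _) (infl_of_isPushout (isPushout_biprod_inr_map A' (-i)) (infl_neg hi)))

lemma isConflation_of_isPushout {A A' B B' : C} {f : A ⟶ A'} {i : A ⟶ B} {i' : A' ⟶ B'}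
    {g : B ⟶ B'} (h : IsPushout f i i' g) (hi : E.infl i) :
    E.IsConflation (biprod.lift f (-i)) (biprod.desc i' g) :=
  isConflation_of_isColimit (infl_biprod_lift_neg f hi) h.isColimitCokernelCofork

end

end ExactStruct

section Op

variable {C : Type u} [Category.{v} C] [Preadditive C] [HasZeroObject C]

def ExactStruct.op (E : ExactStruct C) : ExactStruct Cᵒᵖ where
  infl := fun _ _ f => E.defl f.unop
  defl := fun _ _ f => E.infl f.unop
  infl_comp f g hf hg := E.defl_comp g.unop f.unop hg hf
  defl_comp f g hf hg := E.infl_comp g.unop f.unop hg hf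
  infl_from_zero f hO := E.defl_to_zero f.unop hO.unop
  defl_to_zero f hO := E.infl_from_zero f.unop hO.unop
  pushout_infl i f hi := by
    obtain ⟨Y', p', g', h, hp'⟩ := E.pullback_defl i.unop f.unop hi
    exact ⟨Opposite.op Y', p'.op, g'.op, h.op, hp'⟩
  pullback_defl p f hp := by
    obtain ⟨Y', i', g', h, hi'⟩ := E.pushout_infl p.unop f.unop hp
    exact ⟨Opposite.op Y', i'.op, g'.op, h.op, hi'⟩
  bicartesian a b c d := by
    constructor
    · rintro ⟨h, hc, hd⟩
      obtain ⟨h', hd', hc'⟩ := (E.bicartesian c.unop d.unop a.unop b.unop).mpr ⟨h.unop.flip, hd, hc⟩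
      exact ⟨h'.op.flip, hc', hd'⟩
    · rintro ⟨h, hb, ha⟩
      obtain ⟨h', hb', ha'⟩ := (E.bicartesian c.unop d.unop a.unop b.unop).mp ⟨h.unop.flip, ha, hb⟩
      exact ⟨h'.op.flip, ha', hb'⟩

lemma ExactStruct.IsConflation.op {E : ExactStruct C} {X Y Z : C} {i : X ⟶ Y} {p : Y ⟶ Z}
    (h : E.IsConflation i p) : E.op.IsConflation p.op i.op := by
  obtain ⟨hi, hp, w, ⟨hc⟩, ⟨hk⟩⟩ := h
  exact ⟨hp, hi, congrArg Quiver.Hom.op w, ⟨KernelFork.IsLimit.ofιOp i w hk⟩,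
    ⟨CokernelCofork.IsColimit.ofπOp p w hc⟩⟩

lemma ExactStruct.IsConflation.unop {E : ExactStruct C} {X Y Z : Cᵒᵖ} {i : X ⟶ Y} {p : Y ⟶ Z}
    (h : E.op.IsConflation i p) : E.IsConflation p.unop i.unop := by
  obtain ⟨hi, hp, w, ⟨hc⟩, ⟨hk⟩⟩ := h
  exact ⟨hp, hi, congrArg Quiver.Hom.unop w, ⟨KernelFork.IsLimit.ofιUnop i w hk⟩,
    ⟨CokernelCofork.IsColimit.ofπUnop p w hc⟩⟩

end Op

namespace IsExactFunctor

open ZeroObject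

variable {C D : Type u} [Category.{v} C] [Preadditive C] [HasZeroObject C]
  [Category.{v} D] [Preadditive D] [HasZeroObject D]
  {G : C ⥤ D} {E : ExactStruct C} {ED : ExactStruct D}

lemma op (hG : IsExactFunctor G E ED) : IsExactFunctor G.op E.op ED.op :=
  ⟨fun _ hX => (hG.1 _ hX.unop).op, fun _ hf => hG.2.2.1 _ hf, fun _ hf => hG.2.1 _ hf,
    fun _ _ h => (hG.2.2.2 _ _ h.unop).op⟩

lemma preservesZeroMorphisms (hG : IsExactFunctor G E ED) : G.PreservesZeroMorphisms :=
  Functor.preservesZeroMorphisms_of_map_zero_object (hG.1 0 (isZero_zero C)).isoZero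

/-- `G.map b.inl` is a kernel of `G.map b.snd`, and this forces
`fst ≫ inl + snd ≫ inr = 𝟙` on the image bicone. -/
lemma preservesBinaryBiproducts (hG : IsExactFunctor G E ED) [G.PreservesZeroMorphisms] :
    PreservesBinaryBiproducts G where
  preserves {X Y} := ⟨fun {b} hb => by
    obtain ⟨-, -, w, -, ⟨hk⟩⟩ := hG.2.2.2 _ _ (ExactStruct.isConflation_inl_snd (E := E) hb)
    have hx : (𝟙 _ - G.map b.snd ≫ G.map b.inr) ≫ G.map b.snd = 0 := by
      rw [Preadditive.sub_comp, Category.assoc, ← G.map_comp, b.inr_snd, G.map_id]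
      simp
    obtain ⟨y, hy⟩ : ∃ y : G.obj b.pt ⟶ G.obj X, y ≫ G.map b.inl = _ :=
      ⟨_, (KernelFork.IsLimit.lift' hk _ hx).2⟩
    have hy' : y = G.map b.fst := by
      have := hy =≫ G.map b.fst
      rwa [Category.assoc, ← G.map_comp, b.inl_fst, G.map_id, Category.comp_id,
        Preadditive.sub_comp, Category.assoc, ← G.map_comp, b.inr_fst, G.map_zero, comp_zero,
        sub_zero, Category.id_comp] at this
    refine ⟨isBinaryBilimitOfTotal _ ?_⟩
    change G.map b.fst ≫ G.map b.inl + G.map b.snd ≫ G.map b.inr = 𝟙 (G.obj b.pt)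
    rw [← hy', hy, sub_add_cancel]⟩

lemma additive (hG : IsExactFunctor G E ED) : G.Additive :=
  have := E.hasBinaryBiproducts
  have := hG.preservesZeroMorphisms
  have := hG.preservesBinaryBiproducts
  Functor.additive_of_preservesBinaryBiproducts G

lemma map_isPushout (hG : IsExactFunctor G E ED) {A A' B B' : C} {f : A ⟶ A'} {i : A ⟶ B}
    {i' : A' ⟶ B'} {g : B ⟶ B'} (h : IsPushout f i i' g) (hi : E.infl i) :
    IsPushout (G.map f) (G.map i) (G.map i') (G.map g) := by
  have := E.hasBinaryBiproducts
  have := hG.additive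
  have := hG.preservesBinaryBiproducts
  obtain ⟨-, -, w, ⟨hq⟩, -⟩ := hG.2.2.2 _ _ (E.isConflation_of_isPushout h hi)
  have hm : G.map (biprod.lift f (-i)) =
      G.map f ≫ G.map biprod.inl - G.map i ≫ G.map biprod.inr := by
    simp [biprod.lift_eq, sub_eq_add_neg]
  have hinl : G.map biprod.inl ≫ G.map (biprod.desc i' g) = G.map i' := by
    rw [← G.map_comp, biprod.inl_desc]
  have hinr : G.map biprod.inr ≫ G.map (biprod.desc i' g) = G.map g := by
    rw [← G.map_comp, biprod.inr_desc]
  -- `convert` absorbs the difference between `(G.mapBinaryBicone _).pt` and `G.obj (A' ⊞ B)`.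
  convert isPushout_of_isColimit_cokernelCofork
    (isBinaryBilimitOfPreserves G (BinaryBiproduct.isBilimit A' B)) hm hq using 1
  exacts [hinl.symm, hinr.symm]

lemma map_isPullback (hG : IsExactFunctor G E ED) {A B A' B' : C} {a : A ⟶ B} {b : A ⟶ A'}
    {c : B ⟶ B'} {d : A' ⟶ B'} (h : IsPullback a b c d) (hd : E.defl d) :
    IsPullback (G.map a) (G.map b) (G.map c) (G.map d) :=
  (hG.op.map_isPushout h.op.flip hd).unop.flip

lemma map_infl_of_isPushout (hG : IsExactFunctor G E ED) (ED' : ExactStruct D)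
    {A A' B B' : C} {f : A ⟶ A'} {i : A ⟶ B} {i' : A' ⟶ B'} {g : B ⟶ B'}
    (h : IsPushout f i i' g) (hi : E.infl i) (hGi : ED'.infl (G.map i)) :
    ED'.infl (G.map i') :=
  ExactStruct.infl_of_isPushout (hG.map_isPushout h hi) hGi

lemma map_defl_of_isPullback (hG : IsExactFunctor G E ED) (ED' : ExactStruct D)
    {A A' B B' : C} {g : A' ⟶ A} {p' : A' ⟶ B'} {p : A ⟶ B} {f : B' ⟶ B}
    (h : IsPullback g p' p f) (hp : E.defl p) (hGp : ED'.defl (G.map p)) :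
    ED'.defl (G.map p') :=
  ExactStruct.defl_of_isPullback (hG.map_isPullback h.flip hp).flip hGp

end IsExactFunctor

namespace ExactStruct

variable {C D : Type u} [Category.{v} C] [Preadditive C] [HasZeroObject C]
  [Category.{v} D] [Preadditive D] [HasZeroObject D]
  {E : ExactStruct C} {ED : ExactStruct D} {G : C ⥤ D}

def comap (hG : IsExactFunctor G E ED) (ED' : ExactStruct D) : ExactStruct C where
  infl := fun _ _ f => E.infl f ∧ ED'.infl (G.map f)
  defl := fun _ _ f => E.defl f ∧ ED'.defl (G.map f)
  infl_comp f g hf hg :=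
    ⟨E.infl_comp f g hf.1 hg.1, by simpa using ED'.infl_comp _ _ hf.2 hg.2⟩
  defl_comp f g hf hg :=
    ⟨E.defl_comp f g hf.1 hg.1, by simpa using ED'.defl_comp _ _ hf.2 hg.2⟩
  infl_from_zero f hO := ⟨E.infl_from_zero f hO, ED'.infl_from_zero _ (hG.1 _ hO)⟩
  defl_to_zero f hO := ⟨E.defl_to_zero f hO, ED'.defl_to_zero _ (hG.1 _ hO)⟩
  pushout_infl i f hi := by
    obtain ⟨Y', i', g, h, hi'⟩ := E.pushout_infl i f hi.1
    exact ⟨Y', i', g, h, hi', hG.map_infl_of_isPushout ED' h hi.1 hi.2⟩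
  pullback_defl p f hp := by
    obtain ⟨Y', p', g, h, hp'⟩ := E.pullback_defl p f hp.1
    exact ⟨Y', p', g, h, hp', hG.map_defl_of_isPullback ED' h hp.1 hp.2⟩
  bicartesian a b c d := by
    constructor
    · rintro ⟨h, hc, hd⟩
      obtain ⟨h', hb, ha⟩ := (E.bicartesian a b c d).mp ⟨h, hc.1, hd.1⟩
      obtain ⟨-, hGb, hGa⟩ :=
        (ED'.bicartesian _ _ _ _).mp ⟨hG.map_isPullback h hd.1, hc.2, hd.2⟩
      exact ⟨h', ⟨hb, hGb⟩, ha, hGa⟩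
    · rintro ⟨h, hb, ha⟩
      obtain ⟨h', hc, hd⟩ := (E.bicartesian a b c d).mpr ⟨h, hb.1, ha.1⟩
      obtain ⟨-, hGc, hGd⟩ :=
        (ED'.bicartesian _ _ _ _).mpr ⟨hG.map_isPushout h hb.1, hb.2, ha.2⟩
      exact ⟨h', ⟨hc, hGc⟩, hd, hGd⟩

lemma comap_sub (hG : IsExactFunctor G E ED) (ED' : ExactStruct D) : (comap hG ED').Sub E :=
  ⟨fun _ hf => hf.1, fun _ hf => hf.1⟩

lemma isExactFunctor_comap (hG : IsExactFunctor G E ED) (ED' : ExactStruct D) :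
    IsExactFunctor G (comap hG ED') ED' :=
  ⟨hG.1, fun _ hf => hf.2, fun _ hf => hf.2,
    fun i p hc => ⟨hc.1.2, hc.2.1.2, (hG.2.2.2 i p ⟨hc.1.1, hc.2.1.1, hc.2.2⟩).2.2⟩⟩

end ExactStruct

theorem pullback_subexact_structure_general
    {C D : Type u} [Category.{v} C] [Preadditive C] [HasZeroObject C]
    [Category.{v} D] [Preadditive D] [HasZeroObject D]
    (EC : ExactStruct C) (ED ED' : ExactStruct D)
    (G : C ⥤ D) (hG : IsExactFunctor G EC ED) :
    ∃ EC' : ExactStruct C,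
      (EC'.infl = fun X Y f => EC.infl f ∧ ED'.infl (G.map f)) ∧
      (EC'.defl = fun X Y f => EC.defl f ∧ ED'.defl (G.map f)) ∧
      EC'.Sub EC ∧
      IsExactFunctor G EC' ED' :=
  ⟨ExactStruct.comap hG ED', rfl, rfl, ExactStruct.comap_sub hG ED',
    ExactStruct.isExactFunctor_comap hG ED'⟩

/-- the pullback of a sub-exact structure along an exact functor is an
exact structure, sub-exact in the given one, and the functor is exact for the
pulled-back structures. -/
theorem pullback_subexact_structure
    {C D : Type u} [Category.{v} C] [Preadditive C] [HasZeroObject C]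
    [Category.{v} D] [Preadditive D] [HasZeroObject D]
    (EC : ExactStruct C) (ED ED' : ExactStruct D)
    (hsub : ED'.Sub ED)
    (G : C ⥤ D) (hG : IsExactFunctor G EC ED) :
    ∃ EC' : ExactStruct C,
      (EC'.infl = fun X Y f => EC.infl f ∧ ED'.infl (G.map f)) ∧
      (EC'.defl = fun X Y f => EC.defl f ∧ ED'.defl (G.map f)) ∧
      EC'.Sub EC ∧
      IsExactFunctor G EC' ED' :=
  pullback_subexact_structure_general EC ED ED' G hG

end Stmt5
end

section
/- Let G : C → D be a triangulated functor between triangulated categories admitting a left adjoint F and a right adjoint H, and suppose G is spherical, i.e. the twist cof(id_C → HG) and cotwist fib(FG → id_D) are autoequivalences (so that H ≃ F ∘ T_D for the cotwist T_D). Equip C with the exact/extriangulated structure whose conflations are the distinguished triangles X → Z → Y → X[1] whose image under G splits. Then: (1) every object of the form F(d) is injective and every object H(d) is projective for this structure; (2) C has enough projectives and enough injectives; (3) the classes of projectives and injectives both coincide with the additive closure of the essential image of H (equivalently of F); hence the structure is Frobenius. -/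
/-!
STATEMENT 6: Let G : C → D be a triangulated functor with left adjoint F and right
adjoint H, and suppose G is spherical: the twist T_C = cof(id_C → HG) and the cotwist
T_D = fib(FG → id_D) are autoequivalences.  Equip C with the extriangulated structure
whose conflations are the distinguished triangles X → Z → Y → X[1] whose image under G
splits; its extension groups are E(X,Y) = {α : X ⟶ Y[1] | G(α) = 0}.  Then:
(1) every F(d) is injective and every H(d) is projective;
(2) C has enough projectives and enough injectives;
(3) projectives = injectives = additive closure (retracts) of the essential image of H,
    equivalently of F; hence the structure is Frobenius.
-/

open CategoryTheory Limits Pretriangulated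

namespace Stmt6

universe v u

variable {C D : Type u} [Category.{v} C] [Category.{v} D]
  [HasZeroObject C] [Preadditive C] [HasShift C ℤ]
  [∀ n : ℤ, (shiftFunctor C n).Additive] [Pretriangulated C]
  [HasZeroObject D] [Preadditive D] [HasShift D ℤ]
  [∀ n : ℤ, (shiftFunctor D n).Additive] [Pretriangulated D]

section Defs

variable (G : C ⥤ D)

/-- `I` is injective for the extriangulated structure on `C` pulled back along `G`
from the split structure: every `G`-split extension of any `X` by `I` vanishes. -/
def IsInj (I : C) : Prop :=
  ∀ (X : C) (α : X ⟶ I⟦(1:ℤ)⟧), G.map α = 0 → α = 0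

/-- `P` is projective for the pulled-back extriangulated structure. -/
def IsProj (P : C) : Prop :=
  ∀ (Y : C) (α : P ⟶ Y⟦(1:ℤ)⟧), G.map α = 0 → α = 0

/-- `X` is a conflation-quotient of a projective: there is a `G`-split
distinguished triangle `Z → P → X → Z[1]` with `P` projective. -/
def HasProjResolution (X : C) : Prop :=
  ∃ (Z P : C) (f : Z ⟶ P) (g : P ⟶ X) (α : X ⟶ Z⟦(1:ℤ)⟧),
    (Triangle.mk f g α ∈ distTriang C) ∧ G.map α = 0 ∧ IsProj G P

/-- `X` embeds by a conflation into an injective: there is a `G`-split distinguished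
triangle `X → I → Z → X[1]` with `I` injective. -/
def HasInjResolution (X : C) : Prop :=
  ∃ (I Z : C) (f : X ⟶ I) (g : I ⟶ Z) (α : Z ⟶ X⟦(1:ℤ)⟧),
    (Triangle.mk f g α ∈ distTriang C) ∧ G.map α = 0 ∧ IsInj G I

/-- `X` lies in the additive closure of the essential image of a functor `Φ`:
it is a retract (direct summand) of an object in the image. -/
def InAddImage {E : Type u} [Category.{v} E] (Φ : E ⥤ C) (X : C) : Prop :=
  ∃ (e : E) (s : X ⟶ Φ.obj e) (r : Φ.obj e ⟶ X), s ≫ r = 𝟙 X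

end Defs

/-!
Injectives are the objects whose twist triangle `X → HG X → T_C X → X[1]` splits, i.e. the
retracts of objects `H d`; dually, projectives are the retracts of objects `F d`, through the
triangle on the counit `FG X → X`, whose image under `G` splits.

The twist turns injectives into projectives: for `X` injective, a `G`-split extension
`T_C X → Y[1]` factors through `q_Y : T_C Y → Y[1]`, hence, `T_C` being full, through
`T_C X → HG X → HG Y → T_C Y → Y[1]`, which vanishes. Moreover `T_C (HG c) ≅ HG (T_C c)`: both
are the complement of the summand `HG c` of `HGHG c`, split off once by the unit and once by `HG`
of the unit, with the same retraction `H` of the counit. As `T_C` is essentially surjective, every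
`HG X`, hence every `H d`, is projective. Conversely a projective `X ≅ T_C c` kills the `G`-split
extension `q_c`, so it is a retract of `HG c`.
-/

section Splitting

variable {A : Type*} [Category A] [Preadditive A]

def isoOfSplittingsOfEqR {X₁ X₂ Y₁ Y₂ : A} {f₁ f₂ : X₁ ⟶ X₂} {g₁ : X₂ ⟶ Y₁} {g₂ : X₂ ⟶ Y₂}
    {w₁ : f₁ ≫ g₁ = 0} {w₂ : f₂ ≫ g₂ = 0}
    (σ₁ : (ShortComplex.mk f₁ g₁ w₁).Splitting) (σ₂ : (ShortComplex.mk f₂ g₂ w₂).Splitting)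
    (hr : σ₁.r = σ₂.r) : Y₁ ≅ Y₂ where
  hom := σ₁.s ≫ g₂
  inv := σ₂.s ≫ g₁
  hom_inv_id := by
    have h := σ₂.g_s
    have h' := σ₁.s_r
    dsimp at h h'
    simp [reassoc_of% h, ← hr, reassoc_of% h', σ₁.s_g]
  inv_hom_id := by
    have h := σ₁.g_s
    have h' := σ₂.s_r
    dsimp at h h'
    simp [reassoc_of% h, hr, reassoc_of% h', σ₂.s_g]

end Splitting

section Triangle

variable {𝒯 : Type*} [Category 𝒯] [HasZeroObject 𝒯] [Preadditive 𝒯] [HasShift 𝒯 ℤ]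
  [∀ n : ℤ, (shiftFunctor 𝒯 n).Additive] [Pretriangulated 𝒯]

lemma Triangle.exists_retraction_mor₁ (T : Triangle 𝒯) (hT : T ∈ distTriang 𝒯)
    (h : T.mor₃ = 0) : ∃ r, T.mor₁ ≫ r = 𝟙 T.obj₁ := by
  obtain ⟨e, he, -⟩ := exists_iso_binaryBiproduct_of_distTriang T hT h
  exact ⟨e.hom ≫ biprod.fst, by rw [reassoc_of% he, biprod.inl_fst]⟩

lemma Triangle.exists_section_mor₂ (T : Triangle 𝒯) (hT : T ∈ distTriang 𝒯)
    (h : T.mor₃ = 0) : ∃ s, s ≫ T.mor₂ = 𝟙 T.obj₃ := by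
  obtain ⟨s, hs⟩ := T.coyoneda_exact₃ hT (𝟙 _) (by rw [h, comp_zero])
  exact ⟨s, hs.symm⟩

noncomputable def Triangle.splittingOfRetraction (T : Triangle 𝒯) (hT : T ∈ distTriang 𝒯)
    (r : T.obj₂ ⟶ T.obj₁) (hr : T.mor₁ ≫ r = 𝟙 _) :
    (ShortComplex.mk T.mor₁ T.mor₂ (comp_distTriang_mor_zero₁₂ T hT)).Splitting :=
  have hs := T.yoneda_exact₂ hT (𝟙 _ - r ≫ T.mor₁) (by simp [reassoc_of% hr])
  { r := r
    s := hs.choose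
    f_r := hr
    s_g := by
      have : Epi T.mor₂ :=
        T.epi₂ hT (T.mor₃_eq_zero_of_mono₁ hT (mono_of_mono_fac hr))
      rw [← cancel_epi T.mor₂]
      dsimp
      rw [← reassoc_of% hs.choose_spec]
      simp [comp_distTriang_mor_zero₁₂ T hT]
    id := by
      dsimp
      rw [← hs.choose_spec, add_sub_cancel] }

end Triangle

section Extension

variable {C D : Type u} [Category.{v} C] [Category.{v} D] [Preadditive C] [HasShift C ℤ]
  [Preadditive D] {G : C ⥤ D}

lemma IsProj.of_retract {P X : C} (hP : IsProj G P) (s : X ⟶ P) (r : P ⟶ X)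
    (h : s ≫ r = 𝟙 X) : IsProj G X := fun Y α hα => by
  rw [← Category.id_comp α, ← h, Category.assoc, hP Y (r ≫ α) (by simp [hα]), comp_zero]

lemma IsInj.of_retract {I X : C} (hI : IsInj G I) (s : X ⟶ I) (r : I ⟶ X)
    (h : s ≫ r = 𝟙 X) : IsInj G X := fun W α hα => by
  have h₀ : α ≫ s⟦(1 : ℤ)⟧' = 0 := hI W _ (by simp [hα])
  calc α = α ≫ (s ≫ r)⟦(1 : ℤ)⟧' := by rw [h, CategoryTheory.Functor.map_id, Category.comp_id]
    _ = 0 := by rw [CategoryTheory.Functor.map_comp, reassoc_of% h₀, zero_comp]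

lemma isProj_leftAdjoint_obj [G.PreservesZeroMorphisms] {F : D ⥤ C} (adj : F ⊣ G) (d : D) :
    IsProj G (F.obj d) :=
  fun _ α hα => (adj.homEquiv _ _).injective (by simp [Adjunction.homEquiv_unit, hα])

lemma isProj_of_inAddImage_leftAdjoint [G.PreservesZeroMorphisms] {F : D ⥤ C} (adj : F ⊣ G)
    {X : C} (hX : InAddImage F X) : IsProj G X :=
  let ⟨d, s, r, h⟩ := hX
  (isProj_leftAdjoint_obj adj d).of_retract s r h

variable [∀ n : ℤ, (shiftFunctor C n).Additive] [HasShift D ℤ]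
  [∀ n : ℤ, (shiftFunctor D n).Additive] [G.CommShift ℤ]

lemma isInj_of_forall_map_eq_zero {I : C}
    (hI : ∀ (X : C) (β : X ⟶ I), G.map β = 0 → β = 0) : IsInj G I := by
  intro X α hα
  have hα' : G.map (α⟦(-1 : ℤ)⟧') = 0 := by
    rw [← Preadditive.IsIso.comp_right_eq_zero _ ((G.commShiftIso (-1 : ℤ)).hom.app _),
      G.commShiftIso_hom_naturality, hα, CategoryTheory.Functor.map_zero, comp_zero]
  have h : α⟦(-1 : ℤ)⟧' ≫ ((shiftFunctorCompIsoId C (1 : ℤ) (-1) (by omega)).app I).hom = 0 :=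
    hI _ _ (by rw [G.map_comp, hα', zero_comp])
  exact (shiftFunctor C (-1 : ℤ)).map_eq_zero_iff.mp
    ((Preadditive.IsIso.comp_right_eq_zero _ _).mp h)

variable [G.PreservesZeroMorphisms] {H : D ⥤ C} (adj : G ⊣ H)
include adj

lemma isInj_rightAdjoint_obj (d : D) : IsInj G (H.obj d) :=
  isInj_of_forall_map_eq_zero fun _ β hβ =>
    (adj.homEquiv _ _).symm.injective (by simp [Adjunction.homEquiv_counit, hβ])

lemma isInj_of_inAddImage_rightAdjoint {X : C} (hX : InAddImage H X) : IsInj G X :=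
  let ⟨d, s, r, h⟩ := hX
  (isInj_rightAdjoint_obj adj d).of_retract s r h

end Extension

section Functor

variable {G : C ⥤ D} [G.CommShift ℤ] [G.IsTriangulated]

lemma map_mor₃_eq_zero_of_mono {T : Triangle C} (hT : T ∈ distTriang C)
    (h : Mono (G.map T.mor₁)) : G.map T.mor₃ = 0 :=
  (Preadditive.IsIso.comp_right_eq_zero _ _).mp
    ((G.mapTriangle.obj T).mor₃_eq_zero_of_mono₁ (G.map_distinguished T hT) h)

lemma map_mor₃_eq_zero_of_epi {T : Triangle C} (hT : T ∈ distTriang C)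
    (h : Epi (G.map T.mor₂)) : G.map T.mor₃ = 0 :=
  (Preadditive.IsIso.comp_right_eq_zero _ _).mp
    ((G.mapTriangle.obj T).mor₃_eq_zero_of_epi₂ (G.map_distinguished T hT) h)

end Functor

section LeftAdjoint

variable {G : C ⥤ D} [G.CommShift ℤ] [G.IsTriangulated] {F : D ⥤ C} (adj : F ⊣ G)
include adj

lemma exists_counit_triangle (X : C) :
    ∃ (Z : C) (f : Z ⟶ F.obj (G.obj X)) (α : X ⟶ Z⟦(1 : ℤ)⟧),
      Triangle.mk f (adj.counit.app X) α ∈ distTriang C ∧ G.map α = 0 := by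
  obtain ⟨Z, f, α, hT⟩ := distinguished_cocone_triangle₁ (adj.counit.app X)
  exact ⟨Z, f, α, hT, map_mor₃_eq_zero_of_epi hT
    (SplitEpi.epi ⟨_, adj.right_triangle_components X⟩)⟩

lemma hasProjResolution (X : C) : HasProjResolution G X :=
  let ⟨_, _, _, hT, hα⟩ := exists_counit_triangle adj X
  ⟨_, _, _, _, _, hT, hα, isProj_leftAdjoint_obj adj _⟩

lemma inAddImage_leftAdjoint_of_isProj {X : C} (hX : IsProj G X) : InAddImage F X := by
  obtain ⟨Z, f, α, hT, hα⟩ := exists_counit_triangle adj X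
  obtain ⟨s, hs⟩ := Triangle.exists_section_mor₂ _ hT (hX Z α hα)
  exact ⟨G.obj X, s, adj.counit.app X, hs⟩

end LeftAdjoint

section Twist

variable {G : C ⥤ D} [G.CommShift ℤ] [G.IsTriangulated] {H : D ⥤ C} (adj : G ⊣ H)
  {T_C : C ⥤ C} {p : G ⋙ H ⟶ T_C} {q : ∀ c : C, T_C.obj c ⟶ c⟦(1 : ℤ)⟧}
  (twist_tri : ∀ c : C, Triangle.mk (adj.unit.app c) (p.app c) (q c) ∈ distTriang C)
include twist_tri

lemma map_twist_connecting_eq_zero (c : C) : G.map (q c) = 0 :=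
  map_mor₃_eq_zero_of_mono (twist_tri c) (SplitMono.mono ⟨_, adj.left_triangle_components c⟩)

lemma hasInjResolution (X : C) : HasInjResolution G X :=
  ⟨_, _, _, _, _, twist_tri X, map_twist_connecting_eq_zero adj twist_tri X,
    isInj_rightAdjoint_obj adj _⟩

lemma inAddImage_rightAdjoint_of_isInj {X : C} (hX : IsInj G X) : InAddImage H X := by
  obtain ⟨r, hr⟩ := Triangle.exists_retraction_mor₁ _ (twist_tri X)
    (hX _ _ (map_twist_connecting_eq_zero adj twist_tri X))
  exact ⟨G.obj X, adj.unit.app X, r, hr⟩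

lemma isProj_twist_obj_of_isInj [T_C.Full] {X : C} (hX : IsInj G X) :
    IsProj G (T_C.obj X) := by
  intro Y α hα
  obtain ⟨s : T_C.obj X ⟶ H.obj (G.obj X), hs : s ≫ p.app X = 𝟙 _⟩ :=
    Triangle.exists_section_mor₂ _ (twist_tri X)
      (hX _ _ (map_twist_connecting_eq_zero adj twist_tri X))
  have hα' : α ≫ (adj.unit.app Y)⟦(1 : ℤ)⟧' = 0 :=
    isInj_rightAdjoint_obj adj (G.obj Y) _ _ (by rw [G.map_comp, hα, zero_comp])
  obtain ⟨f, rfl⟩ := Triangle.coyoneda_exact₁ _ (twist_tri Y) α hα'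
  obtain ⟨g, rfl⟩ := T_C.map_surjective f
  calc T_C.map g ≫ q Y = s ≫ p.app X ≫ T_C.map g ≫ q Y := by
        rw [reassoc_of% hs]
    _ = s ≫ H.map (G.map g) ≫ p.app Y ≫ q Y := by
        rw [← p.naturality_assoc]; rfl
    _ = 0 := by
        rw [show p.app Y ≫ q Y = 0 from comp_distTriang_mor_zero₂₃ _ (twist_tri Y),
          comp_zero, comp_zero]

noncomputable def twistObjIso (c : C) : T_C.obj (H.obj (G.obj c)) ≅ H.obj (G.obj (T_C.obj c)) :=
  haveI := adj.right_adjoint_additive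
  isoOfSplittingsOfEqR
    (Triangle.splittingOfRetraction _ (twist_tri (H.obj (G.obj c)))
      (H.map (adj.counit.app (G.obj c))) (adj.right_triangle_components _))
    ((Triangle.splittingOfRetraction _ (G.map_distinguished _ (twist_tri c))
      (adj.counit.app (G.obj c)) (adj.left_triangle_components c)).map H)
    rfl

lemma isProj_obj_map_obj [T_C.Full] [T_C.EssSurj] (X : C) : IsProj G (H.obj (G.obj X)) :=
  let e := (G ⋙ H).mapIso (T_C.objObjPreimageIso X).symm ≪≫
    (twistObjIso adj twist_tri (T_C.objPreimage X)).symm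
  (isProj_twist_obj_of_isInj adj twist_tri (isInj_rightAdjoint_obj adj _)).of_retract
    e.hom e.inv e.hom_inv_id

lemma isProj_rightAdjoint_obj [T_C.Full] [T_C.EssSurj] (d : D) : IsProj G (H.obj d) :=
  (isProj_obj_map_obj adj twist_tri (H.obj d)).of_retract
    (adj.unit.app (H.obj d)) (H.map (adj.counit.app d)) (adj.right_triangle_components d)

lemma isProj_of_inAddImage_rightAdjoint [T_C.Full] [T_C.EssSurj] {X : C}
    (hX : InAddImage H X) : IsProj G X :=
  let ⟨d, s, r, h⟩ := hX
  (isProj_rightAdjoint_obj adj twist_tri d).of_retract s r h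

lemma inAddImage_rightAdjoint_of_isProj [T_C.EssSurj] {X : C} (hX : IsProj G X) :
    InAddImage H X := by
  let c := T_C.objPreimage X
  let e : T_C.obj c ≅ X := T_C.objObjPreimageIso X
  have hq : q c = 0 :=
    hX.of_retract e.hom e.inv e.hom_inv_id _ _ (map_twist_connecting_eq_zero adj twist_tri c)
  obtain ⟨s : T_C.obj c ⟶ H.obj (G.obj c), hs : s ≫ p.app c = 𝟙 _⟩ :=
    Triangle.exists_section_mor₂ _ (twist_tri c) hq
  exact ⟨G.obj c, e.inv ≫ s, p.app c ≫ e.hom, by simp [reassoc_of% hs]⟩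

end Twist

theorem spherical_gives_frobenius_general
    (G : C ⥤ D) [G.CommShift ℤ] [G.IsTriangulated]
    (F : D ⥤ C) (H : D ⥤ C)
    (adjFG : F ⊣ G) (adjGH : G ⊣ H)
    -- the twist `T_C = cof(id_C → HG)`, with triangles `c → HG(c) → T_C(c) → c[1]`
    (T_C : C ⥤ C) [T_C.IsEquivalence]
    (p : (G ⋙ H) ⟶ T_C) (q : ∀ c : C, T_C.obj c ⟶ c⟦(1:ℤ)⟧)
    (twist_tri : ∀ c : C,
      Triangle.mk (adjGH.unit.app c) (p.app c) (q c) ∈ distTriang C) :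
    -- (1)
    (∀ d : D, IsInj G (F.obj d)) ∧ (∀ d : D, IsProj G (H.obj d)) ∧
    -- (2)
    (∀ X : C, HasProjResolution G X) ∧ (∀ X : C, HasInjResolution G X) ∧
    -- (3)
    (∀ X : C, IsInj G X ↔ InAddImage H X) ∧
    (∀ X : C, IsProj G X ↔ InAddImage H X) ∧
    (∀ X : C, IsInj G X ↔ InAddImage F X) ∧
    (∀ X : C, IsProj G X ↔ InAddImage F X) := by
  have injH (X : C) : IsInj G X ↔ InAddImage H X :=
    ⟨inAddImage_rightAdjoint_of_isInj adjGH twist_tri, isInj_of_inAddImage_rightAdjoint adjGH⟩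
  have projH (X : C) : IsProj G X ↔ InAddImage H X :=
    ⟨inAddImage_rightAdjoint_of_isProj adjGH twist_tri,
      isProj_of_inAddImage_rightAdjoint adjGH twist_tri⟩
  have projF (X : C) : IsProj G X ↔ InAddImage F X :=
    ⟨inAddImage_leftAdjoint_of_isProj adjFG, isProj_of_inAddImage_leftAdjoint adjFG⟩
  have injF (X : C) : IsInj G X ↔ InAddImage F X :=
    (injH X).trans ((projH X).symm.trans (projF X))
  exact ⟨fun d => (injF _).2 ⟨d, 𝟙 _, 𝟙 _, Category.id_comp _⟩,
    isProj_rightAdjoint_obj adjGH twist_tri, hasProjResolution adjFG,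
    hasInjResolution adjGH twist_tri, injH, projH, injF, projF⟩

theorem spherical_gives_frobenius
    (G : C ⥤ D) [G.CommShift ℤ] [G.IsTriangulated]
    (F : D ⥤ C) (H : D ⥤ C)
    (adjFG : F ⊣ G) (adjGH : G ⊣ H)
    -- the twist `T_C = cof(id_C → HG)`, with triangles `c → HG(c) → T_C(c) → c[1]`
    (T_C : C ⥤ C) [T_C.IsEquivalence]
    (p : (G ⋙ H) ⟶ T_C) (q : ∀ c : C, T_C.obj c ⟶ c⟦(1:ℤ)⟧)
    (twist_tri : ∀ c : C,
      Triangle.mk (adjGH.unit.app c) (p.app c) (q c) ∈ distTriang C)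
    -- the cotwist `T_D = fib(GH → id_D)` of the adjunction `G ⊣ H`, with triangles
    -- `T_D(d) → G(H(d)) → d → T_D(d)[1]` whose second map is the counit
    (T_D : D ⥤ D) [T_D.IsEquivalence]
    (m : T_D ⟶ (H ⋙ G)) (r : ∀ d : D, d ⟶ (T_D.obj d)⟦(1:ℤ)⟧)
    (cotwist_tri : ∀ d : D,
      Triangle.mk (m.app d) (adjGH.counit.app d) (r d) ∈ distTriang D) :
    -- (1)
    (∀ d : D, IsInj G (F.obj d)) ∧ (∀ d : D, IsProj G (H.obj d)) ∧
    -- (2)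
    (∀ X : C, HasProjResolution G X) ∧ (∀ X : C, HasInjResolution G X) ∧
    -- (3)
    (∀ X : C, IsInj G X ↔ InAddImage H X) ∧
    (∀ X : C, IsProj G X ↔ InAddImage H X) ∧
    (∀ X : C, IsInj G X ↔ InAddImage F X) ∧
    (∀ X : C, IsProj G X ↔ InAddImage F X) :=
  spherical_gives_frobenius_general G F H adjFG adjGH T_C p q twist_tri

end Stmt6
end

section
/- Let (C, E, s) be a Frobenius extriangulated category with finite-dimensional Hom-spaces over a field k, and let T ∈ C be a basic rigid object (E(T,T) = 0). Then T is cluster tilting (i.e. every X ∈ C admits a conflation T_1 → T_0 → X with T_0, T_1 in Add(T)) if and only if for every object X, E(X, T) = 0 implies X ∈ Add(T). -/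
/-!
STATEMENT 7: Let (C, E, s) be a Frobenius extriangulated category with
finite-dimensional Hom-spaces over a field k, and let T be a basic rigid object.
Then T is cluster tilting (every X admits a conflation T₁ → T₀ → X with
T₀, T₁ ∈ Add(T)) if and only if for every X, E(X,T) = 0 implies X ∈ Add(T).
-/

open CategoryTheory Limits Opposite

universe v u w

variable (k : Type) [Field k]

/-- A (k-linear) extriangulated category structure in the sense of Nakaoka–Palu on a
preadditive k-linear category `C`: a biadditive extension functor `E`, a realization
relation `realizes α f g` expressing that the conflation `A → B → Z` realizes the
extension `α ∈ E(Z, A)`, together with the axioms used in this paper: existence of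
realizations, split = zero, and the long exact `Hom`–`E` sequences associated to a
conflation (Nakaoka–Palu; Gorsky–Nakaoka–Palu Thm 3.5). -/
structure Extriangulated (C : Type u) [Category.{v} C] [Preadditive C]
    [CategoryTheory.Linear k C] where
  E : Cᵒᵖ ⥤ C ⥤ ModuleCat.{w} k
  realizes : ∀ {A Z : C}, ((E.obj (op Z)).obj A) → ∀ {B : C}, (A ⟶ B) → (B ⟶ Z) → Prop
  realize_exists : ∀ {A Z : C} (α : (E.obj (op Z)).obj A),
    ∃ (B : C) (f : A ⟶ B) (g : B ⟶ Z), realizes α f g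
  comp_zero : ∀ {A Z B : C} (α : (E.obj (op Z)).obj A) (f : A ⟶ B) (g : B ⟶ Z),
    realizes α f g → f ≫ g = 0
  realizes_zero : ∀ {A Z B : C} (f : A ⟶ B) (g : B ⟶ Z),
    realizes (0 : (E.obj (op Z)).obj A) f g →
      (∃ r : B ⟶ A, f ≫ r = 𝟙 A) ∧ (∃ s : Z ⟶ B, s ≫ g = 𝟙 Z)
  split_zero : ∀ {A Z B : C} (α : (E.obj (op Z)).obj A) (f : A ⟶ B) (g : B ⟶ Z),
    realizes α f g → (∃ r : B ⟶ A, f ≫ r = 𝟙 A) → α = 0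
  ex₁ : ∀ {A Z B T : C} (α : (E.obj (op Z)).obj A) (f : A ⟶ B) (g : B ⟶ Z),
    realizes α f g → ∀ (h : T ⟶ B), h ≫ g = 0 → ∃ h' : T ⟶ A, h' ≫ f = h
  ex₂ : ∀ {A Z B T : C} (α : (E.obj (op Z)).obj A) (f : A ⟶ B) (g : B ⟶ Z),
    realizes α f g → ∀ (h : T ⟶ Z), ((E.map h.op).app A) α = 0 → ∃ h' : T ⟶ B, h' ≫ g = h
  ex₂' : ∀ {A Z B T : C} (α : (E.obj (op Z)).obj A) (f : A ⟶ B) (g : B ⟶ Z),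
    realizes α f g → ∀ (h' : T ⟶ B), ((E.map (h' ≫ g).op).app A) α = 0
  ex₃ : ∀ {A Z B T : C} (α : (E.obj (op Z)).obj A) (f : A ⟶ B) (g : B ⟶ Z),
    realizes α f g → ∀ (β : (E.obj (op T)).obj A), ((E.obj (op T)).map f) β = 0 →
      ∃ h : T ⟶ Z, ((E.map h.op).app A) α = β
  ex₃' : ∀ {A Z B T : C} (α : (E.obj (op Z)).obj A) (f : A ⟶ B) (g : B ⟶ Z),
    realizes α f g → ∀ (h : T ⟶ Z), ((E.obj (op T)).map f) (((E.map h.op).app A) α) = 0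
  ex₄ : ∀ {A Z B T : C} (α : (E.obj (op Z)).obj A) (f : A ⟶ B) (g : B ⟶ Z),
    realizes α f g → ∀ (h : B ⟶ T), f ≫ h = 0 → ∃ h' : Z ⟶ T, g ≫ h' = h
  ex₅ : ∀ {A Z B T : C} (α : (E.obj (op Z)).obj A) (f : A ⟶ B) (g : B ⟶ Z),
    realizes α f g → ∀ (h : A ⟶ T), ((E.obj (op Z)).map h) α = 0 → ∃ h' : B ⟶ T, f ≫ h' = h
  ex₅' : ∀ {A Z B T : C} (α : (E.obj (op Z)).obj A) (f : A ⟶ B) (g : B ⟶ Z),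
    realizes α f g → ∀ (h' : B ⟶ T), ((E.obj (op Z)).map (f ≫ h')) α = 0
  ex₆ : ∀ {A Z B T : C} (α : (E.obj (op Z)).obj A) (f : A ⟶ B) (g : B ⟶ Z),
    realizes α f g → ∀ (β : (E.obj (op Z)).obj T), ((E.map g.op).app T) β = 0 →
      ∃ h : A ⟶ T, ((E.obj (op Z)).map h) α = β
  ex₆' : ∀ {A Z B T : C} (α : (E.obj (op Z)).obj A) (f : A ⟶ B) (g : B ⟶ Z),
    realizes α f g → ∀ (h : A ⟶ T), ((E.map g.op).app T) (((E.obj (op Z)).map h) α) = 0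

namespace Extriangulated

variable {k} {C : Type u} [Category.{v} C] [Preadditive C] [CategoryTheory.Linear k C]
  [HasFiniteBiproducts C]

/-- `(f, g)` is a conflation: it realizes some extension class. -/
def Conflation (σ : Extriangulated k C) {A B Z : C} (f : A ⟶ B) (g : B ⟶ Z) : Prop :=
  ∃ α, σ.realizes α f g

/-- `P` is projective: `E(P, X) = 0` for all `X`. -/
def Projective (σ : Extriangulated k C) (P : C) : Prop :=
  ∀ (X : C) (α : (σ.E.obj (op P)).obj X), α = 0

/-- `I` is injective: `E(X, I) = 0` for all `X`. -/
def Injective (σ : Extriangulated k C) (I : C) : Prop :=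
  ∀ (X : C) (α : (σ.E.obj (op X)).obj I), α = 0

/-- `C` has enough projectives: every `X` admits a conflation `K → P → X` with `P`
projective. -/
def EnoughProjectives (σ : Extriangulated k C) : Prop :=
  ∀ X : C, ∃ (K P : C) (f : K ⟶ P) (g : P ⟶ X),
    σ.Conflation f g ∧ σ.Projective P

/-- `C` has enough injectives: every `X` admits a conflation `X → I → K` with `I`
injective. -/
def EnoughInjectives (σ : Extriangulated k C) : Prop :=
  ∀ X : C, ∃ (I K : C) (f : X ⟶ I) (g : I ⟶ K),
    σ.Conflation f g ∧ σ.Injective I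

/-- Frobenius: enough projectives and injectives, and the two classes coincide. -/
def Frobenius (σ : Extriangulated k C) : Prop :=
  σ.EnoughProjectives ∧ σ.EnoughInjectives ∧ ∀ X : C, (σ.Projective X ↔ σ.Injective X)

/-- `T` is rigid: `E(T, T) = 0`. -/
def Rigid (σ : Extriangulated k C) (T : C) : Prop :=
  ∀ α : (σ.E.obj (op T)).obj T, α = 0

/-- `σ` is extriangulated 2-Calabi–Yau: there is a bifunctorial duality
`E(X,Y) ≅ E(Y,X)^*`. -/
def CY2 (σ : Extriangulated k C) : Prop :=
  ∃ e : ∀ X Y : C,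
      ((σ.E.obj (op X)).obj Y) ≃ₗ[k] Module.Dual k ((σ.E.obj (op Y)).obj X),
    (∀ (X X' Y : C) (f : X' ⟶ X) (β : (σ.E.obj (op X)).obj Y)
        (γ : (σ.E.obj (op Y)).obj X'),
      e X' Y (((σ.E.map f.op).app Y) β) γ = e X Y β (((σ.E.obj (op Y)).map f) γ)) ∧
    (∀ (X Y Y' : C) (g : Y' ⟶ Y) (β : (σ.E.obj (op X)).obj Y')
        (γ : (σ.E.obj (op Y)).obj X),
      e X Y (((σ.E.obj (op X)).map g) β) γ = e X Y' β (((σ.E.map g.op).app X) γ))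

end Extriangulated

/-- `X` is in the additive closure of `T`: a retract of a finite direct sum of copies
of `T`. -/
def InAdd {C : Type u} [Category.{v} C] [Preadditive C] [HasFiniteBiproducts C]
    (T X : C) : Prop :=
  ∃ (n : ℕ) (s : X ⟶ ⨁ (fun _ : Fin n => T)) (r : (⨁ fun _ : Fin n => T) ⟶ X),
    s ≫ r = 𝟙 X

/-- `X` is indecomposable. -/
def Indecomposable {C : Type u} [Category.{v} C] [Preadditive C] [HasFiniteBiproducts C]
    (X : C) : Prop :=
  letI := hasBinaryBiproducts_of_finite_biproducts C
  ¬ IsZero X ∧ ∀ Y Z : C, Nonempty (X ≅ Y ⊞ Z) → IsZero Y ∨ IsZero Z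

/-- `T` is basic: it decomposes into finitely many pairwise non-isomorphic
indecomposable direct summands. -/
def Basic {C : Type u} [Category.{v} C] [Preadditive C] [HasFiniteBiproducts C]
    (T : C) : Prop :=
  ∃ (n : ℕ) (M : Fin n → C), (∀ i, Indecomposable (M i)) ∧
    (∀ i j, i ≠ j → IsEmpty (M i ≅ M j)) ∧ Nonempty (T ≅ ⨁ M)

/-!
(⇒) If `T₁ → T₀ → X` is a conflation with `T₀, T₁ ∈ Add T` and `E(X, T) = 0`, then
also `E(X, T₁) = 0`, so the conflation splits and `X` is a summand of `T₀`.

(⇐) Push a projective presentation `K → P → X` out along a left `Add T`-approximation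
`l : K → T'`, giving a conflation `T' → B → X`. By rigidity every class of `E(B, T)` vanishes
on `T'`, hence comes from some `ξ ∈ E(X, T)`. Since `E(P, T) = 0`, `ξ` is the pushout of the
presentation along a map `K → T`, which factors through `l`; so `ξ` is a pushout of the class
of `T' → B → X` and dies on `B`. Thus `E(B, T) = 0`, `B ∈ Add T` by hypothesis, and
`T' → B → X` is the required conflation.
-/

namespace Extriangulated

variable {k} {C : Type u} [Category.{v} C] [Preadditive C] [CategoryTheory.Linear k C]
  (σ : Extriangulated k C)

def pull {W Z : C} (h : W ⟶ Z) (A : C) :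
    (σ.E.obj (op Z)).obj A →ₗ[k] (σ.E.obj (op W)).obj A :=
  ((σ.E.map h.op).app A).hom

def push (Z : C) {A A' : C} (h : A ⟶ A') :
    (σ.E.obj (op Z)).obj A →ₗ[k] (σ.E.obj (op Z)).obj A' :=
  ((σ.E.obj (op Z)).map h).hom

variable {σ}

lemma pull_id {Z A : C} (θ : (σ.E.obj (op Z)).obj A) : σ.pull (𝟙 Z) A θ = θ := by
  simp [pull]

lemma pull_comp {V W Z A : C} (a : V ⟶ W) (b : W ⟶ Z) (θ : (σ.E.obj (op Z)).obj A) :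
    σ.pull (a ≫ b) A θ = σ.pull a A (σ.pull b A θ) := by
  simp [pull]

lemma push_comp {Z A A' A'' : C} (a : A ⟶ A') (b : A' ⟶ A'') (θ : (σ.E.obj (op Z)).obj A) :
    σ.push Z (a ≫ b) θ = σ.push Z b (σ.push Z a θ) := by
  simp [push]

lemma pull_push {W Z A A' : C} (g : W ⟶ Z) (h : A ⟶ A') (θ : (σ.E.obj (op Z)).obj A) :
    σ.pull g A' (σ.push Z h θ) = σ.push W h (σ.pull g A θ) :=
  LinearMap.congr_fun (congrArg ModuleCat.Hom.hom ((σ.E.map g.op).naturality h)) θ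

lemma pull_self_eq_zero {A B Z : C} {α : (σ.E.obj (op Z)).obj A} {f : A ⟶ B} {g : B ⟶ Z}
    (hα : σ.realizes α f g) : σ.pull g A α = 0 := by
  have h := σ.ex₂' α f g hα (𝟙 B)
  rw [Category.id_comp] at h
  exact h

lemma pull_zero {W Z A : C} (θ : (σ.E.obj (op Z)).obj A) : σ.pull (0 : W ⟶ Z) A θ = 0 := by
  obtain ⟨Y, f, g, hθ⟩ := σ.realize_exists θ
  have h := σ.ex₂' θ f g hθ (0 : W ⟶ Y)
  rw [zero_comp] at h
  exact h

lemma eq_zero_of_pull_eq_zero {ι : Type*} [Fintype ι] {Z A : C} {D : ι → C}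
    (i : ∀ j, D j ⟶ Z) (p : ∀ j, Z ⟶ D j) (hsum : ∑ j, p j ≫ i j = 𝟙 Z)
    (θ : (σ.E.obj (op Z)).obj A) (hθ : ∀ j, σ.pull (i j) A θ = 0) : θ = 0 := by
  obtain ⟨Y, f, g, hr⟩ := σ.realize_exists θ
  choose s hs using fun j => σ.ex₂ θ f g hr (i j) (hθ j)
  have hsection : (∑ j, p j ≫ s j) ≫ g = 𝟙 Z := by
    simp only [Preadditive.sum_comp, Category.assoc, hs, hsum]
  simpa [hsection] using σ.ex₂' θ f g hr (∑ j, p j ≫ s j)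

lemma eq_zero_of_push_eq_zero {ι : Type*} [Fintype ι] {Z A : C} {D : ι → C}
    (p : ∀ j, A ⟶ D j) (i : ∀ j, D j ⟶ A) (hsum : ∑ j, p j ≫ i j = 𝟙 A)
    (θ : (σ.E.obj (op Z)).obj A) (hθ : ∀ j, σ.push Z (p j) θ = 0) : θ = 0 := by
  obtain ⟨Y, f, g, hr⟩ := σ.realize_exists θ
  choose r hr' using fun j => σ.ex₅ θ f g hr (p j) (hθ j)
  have hretraction : f ≫ (∑ j, r j ≫ i j) = 𝟙 A := by
    simp only [Preadditive.comp_sum, ← Category.assoc, hr', hsum]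
  simpa [hretraction] using σ.ex₅' θ f g hr (∑ j, r j ≫ i j)

/-- `E` is not assumed additive in its first variable: additivity is recovered from the
Hom–`E` exact sequences, by testing on the summands of `Z ⊞ Z`. -/
lemma pull_add [HasBinaryBiproducts C] {W Z A : C} (a b : W ⟶ Z)
    (θ : (σ.E.obj (op Z)).obj A) :
    σ.pull (a + b) A θ = σ.pull a A θ + σ.pull b A θ := by
  have hcodiag : σ.pull (biprod.desc (𝟙 Z) (𝟙 Z)) A θ
      = σ.pull biprod.fst A θ + σ.pull biprod.snd A θ := by
    rw [← sub_eq_zero]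
    refine eq_zero_of_pull_eq_zero (D := fun _ : Fin 2 => Z) ![biprod.inl, biprod.inr]
      ![biprod.fst, biprod.snd] (by simp [Fin.sum_univ_two, biprod.total]) _ ?_
    intro j
    fin_cases j <;> simp [← pull_comp, pull_id, pull_zero]
  have hsum : a + b = biprod.lift a b ≫ biprod.desc (𝟙 Z) (𝟙 Z) := by simp
  rw [hsum, pull_comp, hcodiag, map_add, ← pull_comp, ← pull_comp, biprod.lift_fst,
    biprod.lift_snd]

lemma pull_sub [HasBinaryBiproducts C] {W Z A : C} (a b : W ⟶ Z)
    (θ : (σ.E.obj (op Z)).obj A) :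
    σ.pull (a - b) A θ = σ.pull a A θ - σ.pull b A θ := by
  rw [eq_sub_iff_add_eq, ← pull_add, sub_add_cancel]

/-- Exactness of `E(Z, T) → E(B, T) → E(A, T)` is not among the axioms; it follows by dimension
shifting along an injective conflation `T → I → Ω`. -/
lemma exists_pull_eq_of_pull_eq_zero [HasBinaryBiproducts C] (hInj : σ.EnoughInjectives)
    {A B Z T : C} {α : (σ.E.obj (op Z)).obj A} {f : A ⟶ B} {g : B ⟶ Z}
    (hα : σ.realizes α f g) (η : (σ.E.obj (op B)).obj T) (hη : σ.pull f T η = 0) :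
    ∃ ξ : (σ.E.obj (op Z)).obj T, σ.pull g T ξ = η := by
  obtain ⟨I, Ω, i, p, ⟨θ, hθ⟩, hI⟩ := hInj T
  obtain ⟨h, rfl⟩ : ∃ h : B ⟶ Ω, σ.pull h T θ = η := σ.ex₃ θ i p hθ η (hI B _)
  obtain ⟨m, hm⟩ := σ.ex₂ θ i p hθ (f ≫ h)
    (by show σ.pull (f ≫ h) T θ = 0; rwa [pull_comp])
  obtain ⟨m', hm'⟩ := σ.ex₅ α f g hα m (hI Z _)
  obtain ⟨e, he⟩ := σ.ex₄ α f g hα (h - m' ≫ p)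
    (by rw [Preadditive.comp_sub, reassoc_of% hm', hm, sub_self])
  refine ⟨σ.pull e T θ, ?_⟩
  rw [← pull_comp, he, pull_sub, pull_comp m' p, pull_self_eq_zero hθ, map_zero, sub_zero]

lemma exists_push_eq_of_projective {K P X T : C} {α : (σ.E.obj (op X)).obj K} {f : K ⟶ P}
    {g : P ⟶ X} (hα : σ.realizes α f g) (hP : σ.Projective P) (ξ : (σ.E.obj (op X)).obj T) :
    ∃ h : K ⟶ T, σ.push X h α = ξ :=
  σ.ex₆ α f g hα ξ (hP T _)

lemma eq_zero_of_realizes_push [HasBinaryBiproducts C] (hInj : σ.EnoughInjectives)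
    {K P X T T' B : C} {α : (σ.E.obj (op X)).obj K} {f : K ⟶ P} {g : P ⟶ X}
    (hα : σ.realizes α f g) (hP : σ.Projective P)
    (hT' : ∀ β : (σ.E.obj (op T')).obj T, β = 0) (l : K ⟶ T')
    (hl : ∀ h : K ⟶ T, ∃ h' : T' ⟶ T, l ≫ h' = h) {f' : T' ⟶ B} {g' : B ⟶ X}
    (hα' : σ.realizes (σ.push X l α) f' g') (η : (σ.E.obj (op B)).obj T) : η = 0 := by
  obtain ⟨ξ, rfl⟩ := exists_pull_eq_of_pull_eq_zero hInj hα' η (hT' _)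
  obtain ⟨h, rfl⟩ := exists_push_eq_of_projective hα hP ξ
  obtain ⟨h', rfl⟩ := hl h
  rw [push_comp, pull_push, pull_self_eq_zero hα', map_zero]

end Extriangulated

section AddClosure

variable {C : Type u} [Category.{v} C] [Preadditive C] [HasFiniteBiproducts C]

lemma InAdd.of_retract {T X Y : C} (hY : InAdd T Y) (s : X ⟶ Y) (r : Y ⟶ X)
    (h : s ≫ r = 𝟙 X) : InAdd T X := by
  obtain ⟨n, s₀, r₀, h₀⟩ := hY
  exact ⟨n, s ≫ s₀, r₀ ≫ r, by simp [reassoc_of% h₀, h]⟩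

lemma InAdd.exists_sum_eq_id {T M : C} (hM : InAdd T M) :
    ∃ (n : ℕ) (p : Fin n → (M ⟶ T)) (i : Fin n → (T ⟶ M)),
      ∑ j, p j ≫ i j = 𝟙 M := by
  obtain ⟨n, s, r, hsr⟩ := hM
  refine ⟨n, fun j => s ≫ biproduct.π _ j,
    fun j => biproduct.ι (fun _ : Fin n => T) j ≫ r, ?_⟩
  have htotal := congrArg (fun t => s ≫ t ≫ r) (biproduct.total (f := fun _ : Fin n => T))
  simp only [Preadditive.comp_sum, Preadditive.sum_comp, Category.assoc, Category.id_comp,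
    hsr] at htotal ⊢
  exact htotal

variable {k} [CategoryTheory.Linear k C] {σ : Extriangulated k C}

lemma Extriangulated.eq_zero_of_inAdd_right {X T M : C}
    (hX : ∀ α : (σ.E.obj (op X)).obj T, α = 0) (hM : InAdd T M)
    (β : (σ.E.obj (op X)).obj M) : β = 0 := by
  obtain ⟨n, p, i, hsum⟩ := hM.exists_sum_eq_id
  exact eq_zero_of_push_eq_zero (D := fun _ => T) p i hsum β fun _ => hX _

lemma Extriangulated.eq_zero_of_inAdd_left {Y T M : C}
    (hY : ∀ α : (σ.E.obj (op T)).obj Y, α = 0) (hM : InAdd T M)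
    (β : (σ.E.obj (op M)).obj Y) : β = 0 := by
  obtain ⟨n, p, i, hsum⟩ := hM.exists_sum_eq_id
  exact eq_zero_of_pull_eq_zero (D := fun _ => T) i p hsum β fun _ => hY _

lemma exists_left_approximation (K T : C) [Module.Finite k (K ⟶ T)] :
    ∃ (n : ℕ) (l : K ⟶ ⨁ fun _ : Fin n => T), ∀ h : K ⟶ T, ∃ h', l ≫ h' = h := by
  obtain ⟨n, s, hs⟩ := Module.Finite.exists_fin (R := k) (M := K ⟶ T)
  refine ⟨n, biproduct.lift s, fun h => ?_⟩
  obtain ⟨c, hc⟩ :=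
    (Submodule.mem_span_range_iff_exists_fun k).mp (hs.symm ▸ Submodule.mem_top (x := h))
  exact ⟨biproduct.desc fun j => c j • 𝟙 T, by simpa [biproduct.lift_desc] using hc⟩

end AddClosure

namespace Stmt7

theorem cluster_tilting_characterization
    {C : Type u} [Category.{v} C] [Preadditive C] [CategoryTheory.Linear k C]
    [HasFiniteBiproducts C]
    [∀ X Y : C, FiniteDimensional k (X ⟶ Y)]
    (σ : Extriangulated k C) (hFrob : σ.Frobenius)
    (T : C) (hbasic : Basic T) (hrigid : σ.Rigid T) :
    (∀ X : C, ∃ (T₁ T₀ : C) (f : T₁ ⟶ T₀) (g : T₀ ⟶ X),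
        σ.Conflation f g ∧ InAdd T T₁ ∧ InAdd T T₀)
    ↔ (∀ X : C, (∀ α : (σ.E.obj (op X)).obj T, α = 0) → InAdd T X) := by
  constructor
  · intro hCT X hX
    obtain ⟨T₁, T₀, f, g, ⟨α, hα⟩, h₁, h₀⟩ := hCT X
    rw [σ.eq_zero_of_inAdd_right hX h₁ α] at hα
    obtain ⟨-, s, hs⟩ := σ.realizes_zero f g hα
    exact h₀.of_retract s g hs
  · intro hAdd X
    obtain ⟨K, P, f, g, ⟨α, hα⟩, hP⟩ := hFrob.1 X
    obtain ⟨n, l, hl⟩ := exists_left_approximation (k := k) K T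
    obtain ⟨B, f', g', hα'⟩ := σ.realize_exists (σ.push X l α)
    have hT' : InAdd T (⨁ fun _ : Fin n => T) := ⟨n, 𝟙 _, 𝟙 _, Category.id_comp _⟩
    have := hasBinaryBiproducts_of_finite_biproducts C
    refine ⟨_, B, f', g', ⟨_, hα'⟩, hT', hAdd B fun η => ?_⟩
    exact σ.eq_zero_of_realizes_push hFrob.2.1 hα hP
      (σ.eq_zero_of_inAdd_left hrigid hT') l hl hα' η

end Stmt7
end

section
/- Let F : C ↔ D : G be a spherical adjunction of stable ∞-categories (or an adjunction of triangulated functors with functorial cones), with unit u : id_C → GF. For every object c ∈ C, the image under F of the fiber-cofiber sequence c →^{u_c} GF(c) → T_C(c) (T_C the twist) splits, i.e. F(c) → FGF(c) → FT_C(c) is a split triangle in D. -/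
/-!
By the triangle identity `ε_{F c} ∘ F(u_c) = 1`, the map `F(u_c)` is a split monomorphism.
Since `F` is triangulated, `F(c) → FGF(c) → F(T_C c) → F(c)[1]` is distinguished, and in a
distinguished triangle whose first map is a monomorphism the connecting map vanishes, so the
second map is an epimorphism, hence split (every epimorphism in a pretriangulated category splits).
-/

open CategoryTheory Limits Pretriangulated

lemma CategoryTheory.Adjunction.isSplitMono_map_unit_app {C D : Type*} [Category C] [Category D]
    {F : C ⥤ D} {G : D ⥤ C} (adj : F ⊣ G) (c : C) : IsSplitMono (F.map (adj.unit.app c)) :=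
  IsSplitMono.mk' ⟨adj.counit.app (F.obj c), adj.left_triangle_components c⟩

lemma CategoryTheory.Pretriangulated.Triangle.isSplitEpi_mor₂_of_mono₁ {C : Type*} [Category C]
    [HasZeroObject C] [HasShift C ℤ] [Preadditive C]
    [∀ n : ℤ, (CategoryTheory.shiftFunctor C n).Additive] [Pretriangulated C]
    (T : Triangle C) (hT : T ∈ distTriang C) (h : Mono T.mor₁) :
    IsSplitEpi T.mor₂ :=
  have := T.epi₂ hT (T.mor₃_eq_zero_of_mono₁ hT h)
  isSplitEpi_of_epi _

namespace Stmt11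

universe v u

variable {C D : Type u} [Category.{v} C] [Category.{v} D]
  [HasZeroObject C] [Preadditive C] [HasShift C ℤ]
  [∀ n : ℤ, (shiftFunctor C n).Additive] [Pretriangulated C]
  [HasZeroObject D] [Preadditive D] [HasShift D ℤ]
  [∀ n : ℤ, (shiftFunctor D n).Additive] [Pretriangulated D]

theorem image_of_unit_triangle_splits_general
    (F : C ⥤ D) (G : D ⥤ C) [F.CommShift ℤ] [F.IsTriangulated]
    (adj : F ⊣ G)
    -- twist `T_C = cof(id_C → GF)` with distinguished triangles
    -- `c → GF(c) → T_C(c) → c[1]`, first map the unit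
    (T_C : C ⥤ C)
    (p : (F ⋙ G) ⟶ T_C) (q : ∀ c : C, T_C.obj c ⟶ c⟦(1:ℤ)⟧)
    (twist_tri : ∀ c : C,
      Triangle.mk (adj.unit.app c) (p.app c) (q c) ∈ distTriang C)
    (c : C) :
    -- the triangle `F(c) → FGF(c) → F(T_C c)` splits:
    (∃ ret : F.obj ((F ⋙ G).obj c) ⟶ F.obj c,
      F.map (adj.unit.app c) ≫ ret = 𝟙 (F.obj c)) ∧
    (∃ sec : F.obj (T_C.obj c) ⟶ F.obj ((F ⋙ G).obj c),
      sec ≫ F.map (p.app c) = 𝟙 (F.obj (T_C.obj c))) := by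
  have : IsSplitMono (F.map (adj.unit.app c)) := adj.isSplitMono_map_unit_app c
  have : IsSplitEpi (F.map (p.app c)) :=
    Triangle.isSplitEpi_mor₂_of_mono₁ _ (F.map_distinguished _ (twist_tri c))
      (inferInstanceAs (Mono (F.map (adj.unit.app c))))
  exact ⟨⟨retraction _, IsSplitMono.id _⟩, ⟨section_ _, IsSplitEpi.id _⟩⟩

theorem image_of_unit_triangle_splits
    (F : C ⥤ D) (G : D ⥤ C) [F.CommShift ℤ] [F.IsTriangulated]
    [G.CommShift ℤ] [G.IsTriangulated]
    (adj : F ⊣ G)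
    -- twist `T_C = cof(id_C → GF)` with distinguished triangles
    -- `c → GF(c) → T_C(c) → c[1]`, first map the unit
    (T_C : C ⥤ C) [T_C.IsEquivalence]
    (p : (F ⋙ G) ⟶ T_C) (q : ∀ c : C, T_C.obj c ⟶ c⟦(1:ℤ)⟧)
    (twist_tri : ∀ c : C,
      Triangle.mk (adj.unit.app c) (p.app c) (q c) ∈ distTriang C)
    -- cotwist `T_D = fib(FG → id_D)` with distinguished triangles
    -- `T_D(d) → FG(d) → d → T_D(d)[1]`, second map the counit
    (T_D : D ⥤ D) [T_D.IsEquivalence]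
    (m : T_D ⟶ (G ⋙ F)) (r : ∀ d : D, d ⟶ (T_D.obj d)⟦(1:ℤ)⟧)
    (cotwist_tri : ∀ d : D,
      Triangle.mk (m.app d) (adj.counit.app d) (r d) ∈ distTriang D)
    (c : C) :
    -- the triangle `F(c) → FGF(c) → F(T_C c)` splits:
    (∃ ret : F.obj ((F ⋙ G).obj c) ⟶ F.obj c,
      F.map (adj.unit.app c) ≫ ret = 𝟙 (F.obj c)) ∧
    (∃ sec : F.obj (T_C.obj c) ⟶ F.obj ((F ⋙ G).obj c),
      sec ≫ F.map (p.app c) = 𝟙 (F.obj (T_C.obj c))) :=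
  image_of_unit_triangle_splits_general F G adj T_C p q twist_tri c

end Stmt11
end
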